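/- Let f be a C² real function on an open subinterval of (0, ∞) and define u : ℝ⁴ × ℝ³ → ℝ by u(x, t) = ‖t‖ − f(‖x‖). Then at every point (x, t) with r := ‖x‖ > 0 in the domain of f and ‖t‖ > 0, the horizontal Laplacian of u equals Σᵢ₌₁⁴ ξᵢ(ξᵢu) = −f″(r) − 3f′(r)/r + 8r²/‖t‖. -/

import Mathlib

open Set

/-- The horizontal vector fields `ξ₁, ξ₂, ξ₃, ξ₄` of the quaternionic Heisenberg
group, on `ℝ⁷ ≃ ℝ⁴ × ℝ³` with coordinates `(x₁,x₂,x₃,x₄,t₁,t₂,t₃)`. -/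
noncomputable def xiVF : Fin 4 → (Fin 7 → ℝ) → (Fin 7 → ℝ)
  | 0 => fun p => ![1, 0, 0, 0, 2 * p 1, 2 * p 2, 2 * p 3]
  | 1 => fun p => ![0, 1, 0, 0, -2 * p 0, -2 * p 3, 2 * p 2]
  | 2 => fun p => ![0, 0, 1, 0, 2 * p 3, -2 * p 0, -2 * p 1]
  | 3 => fun p => ![0, 0, 0, 1, -2 * p 2, 2 * p 1, -2 * p 0]

/-- The directional derivative `ξᵢ u` of a function `u` along `ξᵢ`. -/
noncomputable def xiD (i : Fin 4) (u : (Fin 7 → ℝ) → ℝ) (p : Fin 7 → ℝ) : ℝ :=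
  fderiv ℝ u p (xiVF i p)

/-- The norm of the horizontal gradient, `|∇₀u| = (Σᵢ (ξᵢu)²)^{1/2}`. -/
noncomputable def hGradNorm (u : (Fin 7 → ℝ) → ℝ) (p : Fin 7 → ℝ) : ℝ :=
  Real.sqrt (∑ i : Fin 4, (xiD i u p) ^ 2)

/-- The horizontal mean curvature `H⁰ = Σᵢ ξᵢ(ξᵢu / |∇₀u|)` of the level
hypersurface of `u`. -/
noncomputable def hMeanCurv (u : (Fin 7 → ℝ) → ℝ) (p : Fin 7 → ℝ) : ℝ :=
  ∑ i : Fin 4, xiD i (fun q => xiD i u q / hGradNorm u q) p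

/-- The horizontal radius `‖x‖ = (x₁²+x₂²+x₃²+x₄²)^{1/2}`. -/
noncomputable def nx (p : Fin 7 → ℝ) : ℝ :=
  Real.sqrt (p 0 ^ 2 + p 1 ^ 2 + p 2 ^ 2 + p 3 ^ 2)

/-- The vertical radius `‖t‖ = (t₁²+t₂²+t₃²)^{1/2}`. -/
noncomputable def nt (p : Fin 7 → ℝ) : ℝ :=
  Real.sqrt (p 4 ^ 2 + p 5 ^ 2 + p 6 ^ 2)

/-!
Each `ξᵢ` is constant along its own lines `s ↦ p + s ξᵢ(p)`, because the `t`-components of `ξᵢ`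
do not involve `xᵢ`. Hence `ξᵢ(ξᵢu)(p)` is the second derivative at `0` of `s ↦ u(p + s ξᵢ(p))`,
and along such a line `‖x‖²` and `‖t‖²` are quadratic polynomials in `s`. For
`h(s) = g(√(ρ² + 2bs + cs²))` one has `h″(0) = g″(ρ) b²/ρ² + g′(ρ)(c/ρ − b²/ρ³)`, and summing these
over `i` only needs `Σᵢ xᵢ² = ‖x‖²`, `Σᵢ |ξᵢ(p)_t|² = 12‖x‖²` and `Σᵢ ⟨t, ξᵢ(p)_t⟩² = 4‖x‖²‖t‖²`.
-/

open Filter Topology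

theorem fderiv_dirDeriv_eq_deriv_deriv_line {E : Type*} [NormedAddCommGroup E] [NormedSpace ℝ E]
    {u : E → ℝ} {V : E → E} {p : E} (hu : ContDiffAt ℝ 2 u p) (hV : DifferentiableAt ℝ V p)
    (hVline : ∀ᶠ s : ℝ in 𝓝 0, V (p + s • V p) = V p) :
    fderiv ℝ (fun q => fderiv ℝ u q (V q)) p (V p) =
      deriv (deriv fun s : ℝ => u (p + s • V p)) 0 := by
  have hline : Tendsto (fun s : ℝ => p + s • V p) (𝓝 0) (𝓝 p) :=
    (by fun_prop : Continuous fun s : ℝ => p + s • V p).tendsto' 0 p (by simp)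
  have hu' : ∀ᶠ q in 𝓝 p, DifferentiableAt ℝ u q :=
    (hu.eventually (by simp)).mono fun q hq => hq.differentiableAt (by simp)
  have hderiv : deriv (fun s : ℝ => u (p + s • V p)) =ᶠ[𝓝 0]
      fun s => fderiv ℝ u (p + s • V p) (V (p + s • V p)) := by
    filter_upwards [hline.eventually hu', hVline] with s hs hVs
    rw [hVs, hs.deriv_comp_add_smul]
  have hg : DifferentiableAt ℝ (fun q => fderiv ℝ u q (V q)) (p + (0 : ℝ) • V p) := by
    simpa using ((hu.fderiv_right (m := 1) (by norm_num)).differentiableAt (by simp)).clm_apply hV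
  rw [hderiv.deriv_eq, hg.deriv_comp_add_smul]
  simp

theorem hasDerivAt_deriv_comp_sqrt_quadratic {g : ℝ → ℝ} {ρ b c : ℝ} (hρ : 0 < ρ)
    (hg : ContDiffAt ℝ 2 g ρ) :
    (∀ᶠ s in 𝓝 0, DifferentiableAt ℝ (fun s => g √(ρ ^ 2 + 2 * b * s + c * s ^ 2)) s) ∧
      HasDerivAt (deriv fun s => g √(ρ ^ 2 + 2 * b * s + c * s ^ 2))
        (deriv (deriv g) ρ * (b / ρ) ^ 2 + deriv g ρ * (c / ρ - b ^ 2 / ρ ^ 3)) 0 := by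
  set Q : ℝ → ℝ := fun s => ρ ^ 2 + 2 * b * s + c * s ^ 2
  have hQ : ∀ s, HasDerivAt Q (2 * b + 2 * c * s) s := fun s => by
    have : HasDerivAt Q _ s := (((hasDerivAt_id s).const_mul (2 * b)).const_add (ρ ^ 2)).add
      ((hasDerivAt_pow 2 s).const_mul c)
    exact this.congr_deriv (by simp; ring)
  have hR0 : √(Q 0) = ρ := by simp [Q, Real.sqrt_sq hρ.le]
  have hQpos : ∀ᶠ s in 𝓝 0, 0 < Q s :=
    continuousAt_const.eventually_lt (hQ 0).continuousAt (by simpa [Q] using pow_pos hρ 2)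
  have hRcont : Tendsto (fun s => √(Q s)) (𝓝 0) (𝓝 ρ) := by
    simpa [hR0] using ((hQ 0).continuousAt.sqrt).tendsto
  have hR : ∀ s, 0 < Q s → HasDerivAt (fun s => √(Q s)) ((b + c * s) / √(Q s)) s := fun s hs => by
    convert (hQ s).sqrt hs.ne' using 1
    field_simp
  have hg' : ∀ᶠ y in 𝓝 ρ, DifferentiableAt ℝ g y :=
    (hg.eventually (by simp)).mono fun y hy => hy.differentiableAt (by simp)
  have hderiv : ∀ᶠ s in 𝓝 0, HasDerivAt (fun s => g √(Q s))
      (deriv g √(Q s) * ((b + c * s) / √(Q s))) s := by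
    filter_upwards [hQpos, hRcont.eventually hg'] with s hs hgs
    exact hgs.hasDerivAt.comp s (hR s hs)
  refine ⟨hderiv.mono fun s hs => hs.differentiableAt, ?_⟩
  have hg₂ : HasDerivAt (deriv g) (deriv (deriv g) ρ) ρ :=
    ((hg.derivWithin (m := 1) (by norm_num)).differentiableAt (by simp)).hasDerivAt
  have hR0' : HasDerivAt (fun s => √(Q s)) (b / ρ) 0 := by
    simpa [hR0] using hR 0 (by simpa [Q] using pow_pos hρ 2)
  have h2 := (hg₂.comp_of_eq (0 : ℝ) hR0' hR0.symm).mul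
    (((hasDerivAt_id (0 : ℝ)).const_mul c).const_add b |>.div hR0' (by rw [hR0]; exact hρ.ne'))
  refine (h2.congr_of_eventuallyEq (hderiv.mono fun s hs => hs.deriv)).congr_deriv ?_
  simp only [Function.comp_def, Pi.div_apply, id, hR0]
  field_simp
  ring

def xInner (p v : Fin 7 → ℝ) : ℝ := p 0 * v 0 + p 1 * v 1 + p 2 * v 2 + p 3 * v 3

def tInner (p v : Fin 7 → ℝ) : ℝ := p 4 * v 4 + p 5 * v 5 + p 6 * v 6

theorem sq_nx (p : Fin 7 → ℝ) : nx p ^ 2 = xInner p p := by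
  rw [nx, Real.sq_sqrt (by positivity), xInner]; ring

theorem sq_nt (p : Fin 7 → ℝ) : nt p ^ 2 = tInner p p := by
  rw [nt, Real.sq_sqrt (by positivity), tInner]; ring

theorem nx_add_smul (p v : Fin 7 → ℝ) (s : ℝ) :
    nx (p + s • v) = √(nx p ^ 2 + 2 * xInner p v * s + xInner v v * s ^ 2) := by
  rw [nx, nx, Real.sq_sqrt (by positivity)]
  congr 1
  simp only [Pi.add_apply, Pi.smul_apply, smul_eq_mul, xInner]
  ring

theorem nt_add_smul (p v : Fin 7 → ℝ) (s : ℝ) :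
    nt (p + s • v) = √(nt p ^ 2 + 2 * tInner p v * s + tInner v v * s ^ 2) := by
  rw [nt, nt, Real.sq_sqrt (by positivity)]
  congr 1
  simp only [Pi.add_apply, Pi.smul_apply, smul_eq_mul, tInner]
  ring

theorem contDiffAt_nx {n : WithTop ℕ∞} {p : Fin 7 → ℝ} (hp : 0 < nx p) :
    ContDiffAt ℝ n nx p :=
  ContDiffAt.sqrt (by fun_prop) (Real.sqrt_pos.mp hp).ne'

theorem contDiffAt_nt {n : WithTop ℕ∞} {p : Fin 7 → ℝ} (hp : 0 < nt p) :
    ContDiffAt ℝ n nt p :=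
  ContDiffAt.sqrt (by fun_prop) (Real.sqrt_pos.mp hp).ne'

theorem xiVF_add_smul_self (i : Fin 4) (p : Fin 7 → ℝ) (s : ℝ) :
    xiVF i (p + s • xiVF i p) = xiVF i p := by
  fin_cases i <;> ext j <;> fin_cases j <;> simp [xiVF]

theorem differentiable_xiVF (i : Fin 4) : Differentiable ℝ (xiVF i) := by
  refine differentiable_pi.2 fun j => ?_
  fin_cases i <;> fin_cases j <;> simp [xiVF] <;> fun_prop

theorem sum_xInner_xiVF_sq (p : Fin 7 → ℝ) : ∑ i, xInner p (xiVF i p) ^ 2 = xInner p p := by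
  simp [Fin.sum_univ_four, xInner, xiVF]; ring

theorem xInner_xiVF_self (i : Fin 4) (p : Fin 7 → ℝ) : xInner (xiVF i p) (xiVF i p) = 1 := by
  fin_cases i <;> simp [xInner, xiVF]

theorem sum_tInner_xiVF_self (p : Fin 7 → ℝ) :
    ∑ i, tInner (xiVF i p) (xiVF i p) = 12 * xInner p p := by
  simp [Fin.sum_univ_four, tInner, xInner, xiVF]; ring

theorem sum_tInner_xiVF_sq (p : Fin 7 → ℝ) :
    ∑ i, tInner p (xiVF i p) ^ 2 = 4 * xInner p p * tInner p p := by
  simp [Fin.sum_univ_four, tInner, xInner, xiVF]; ring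

theorem fderiv_dirDeriv_nt_sub_comp_nx {f : ℝ → ℝ} {V : (Fin 7 → ℝ) → Fin 7 → ℝ}
    {p : Fin 7 → ℝ} (hf : ContDiffAt ℝ 2 f (nx p)) (hx : 0 < nx p) (ht : 0 < nt p)
    (hV : DifferentiableAt ℝ V p) (hVline : ∀ᶠ s : ℝ in 𝓝 0, V (p + s • V p) = V p) :
    fderiv ℝ (fun q => fderiv ℝ (fun q' => nt q' - f (nx q')) q (V q)) p (V p) =
      tInner (V p) (V p) / nt p - tInner p (V p) ^ 2 / nt p ^ 3 -
        (deriv (deriv f) (nx p) * (xInner p (V p) / nx p) ^ 2 +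
          deriv f (nx p) * (xInner (V p) (V p) / nx p - xInner p (V p) ^ 2 / nx p ^ 3)) := by
  have hu : ContDiffAt ℝ 2 (fun q => nt q - f (nx q)) p :=
    (contDiffAt_nt ht).sub (hf.comp p (contDiffAt_nx hx))
  obtain ⟨hT, hT'⟩ := hasDerivAt_deriv_comp_sqrt_quadratic (b := tInner p (V p))
    (c := tInner (V p) (V p)) ht (contDiffAt_id (𝕜 := ℝ))
  obtain ⟨hX, hX'⟩ := hasDerivAt_deriv_comp_sqrt_quadratic (b := xInner p (V p))
    (c := xInner (V p) (V p)) hx hf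
  have hdiff := (hT'.sub hX').congr_of_eventuallyEq <| by
    filter_upwards [hT, hX] with s h₁ h₂
    exact deriv_sub h₁ h₂
  rw [fderiv_dirDeriv_eq_deriv_deriv_line hu hV hVline]
  simp only [nt_add_smul, nx_add_smul]
  convert hdiff.deriv using 1
  · rfl
  · simp

theorem horizontal_laplacian_rotational_general
    (s : Set ℝ) (hs : IsOpen s) (hsub : s ⊆ Ioi 0)
    (f : ℝ → ℝ) (hf : ContDiffOn ℝ 2 f s)
    (p : Fin 7 → ℝ) (hr : nx p ∈ s) (htpos : 0 < nt p) :
    ∑ i : Fin 4, xiD i (fun q => xiD i (fun q' => nt q' - f (nx q')) q) p =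
      -(deriv (deriv f) (nx p)) - 3 * deriv f (nx p) / nx p +
        8 * nx p ^ 2 / nt p := by
  have hx : 0 < nx p := hsub hr
  have hfx : ContDiffAt ℝ 2 f (nx p) := hf.contDiffAt (hs.mem_nhds hr)
  simp only [xiD]
  rw [Finset.sum_congr rfl fun i _ => fderiv_dirDeriv_nt_sub_comp_nx hfx hx htpos
    (differentiable_xiVF i p) (.of_forall (xiVF_add_smul_self i p))]
  simp only [Finset.sum_sub_distrib, Finset.sum_add_distrib, ← Finset.mul_sum, ← Finset.sum_div,
    div_pow, xInner_xiVF_self, Finset.sum_const, Finset.card_univ, Fintype.card_fin,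
    sum_tInner_xiVF_self, sum_tInner_xiVF_sq, sum_xInner_xiVF_sq]
  rw [← sq_nx, ← sq_nt]
  field_simp
  ring

/-- For `u(x,t) = ‖t‖ − f(‖x‖)`, at points with `r = ‖x‖ > 0` in the domain of `f`
and `‖t‖ > 0`, the horizontal Laplacian is
`Σᵢ ξᵢ(ξᵢu) = −f″(r) − 3f′(r)/r + 8r²/‖t‖`. -/
theorem horizontal_laplacian_rotational
    (s : Set ℝ) (hs : IsOpen s) (hsord : s.OrdConnected) (hsub : s ⊆ Ioi 0)
    (f : ℝ → ℝ) (hf : ContDiffOn ℝ 2 f s)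
    (p : Fin 7 → ℝ) (hr : nx p ∈ s) (htpos : 0 < nt p) :
    ∑ i : Fin 4, xiD i (fun q => xiD i (fun q' => nt q' - f (nx q')) q) p =
      -(deriv (deriv f) (nx p)) - 3 * deriv f (nx p) / nx p +
        8 * nx p ^ 2 / nt p :=
  horizontal_laplacian_rotational_general s hs hsub f hf p hr htpos
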